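/- arXiv:2302.04529 — 5 statements merged into one kernel-verified Lean document; each statement's English description precedes it below -/
import Mathlib

section
/- If S^1 and S^2 are locally consistent composable specifications (i.e., Act_o^1 ∩ Act_o^2 = ∅), then their parallel composition S^1 ∥ S^2 is locally consistent. -/
open scoped NNReal

/-- A (raw) Timed I/O Transition System over an ambient action type `Act`
and state type `Q`.  The actual sets of input and output actions are the
fields `inputs` and `outputs`; `actTrans` is the action-labelled part of
the transition relation and `delayTrans` the delay-labelled part. -/
structure TIOTS (Act : Type) (Q : Type) where
  init : Q
  inputs : Set Act
  outputs : Set Act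
  actTrans : Q → Act → Q → Prop
  delayTrans : Q → ℝ≥0 → Q → Prop

namespace TIOTS

variable {Act Q Q1 Q2 Q3 : Type}

/-- The alphabet (action set) of a TIOTS. -/
def acts (S : TIOTS Act Q) : Set Act := S.inputs ∪ S.outputs

/-- The axioms of Timed I/O Transition Systems: inputs and outputs are
disjoint, action transitions are labelled by actions of the alphabet,
determinism (for actions and delays), time reflexivity and time additivity. -/
def IsTIOTS (S : TIOTS Act Q) : Prop :=
  Disjoint S.inputs S.outputs ∧
  (∀ q a q', S.actTrans q a q' → a ∈ S.acts) ∧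
  (∀ q a q' q'', S.actTrans q a q' → S.actTrans q a q'' → q' = q'') ∧
  (∀ q (d : ℝ≥0) q' q'', S.delayTrans q d q' → S.delayTrans q d q'' → q' = q'') ∧
  (∀ q, S.delayTrans q 0 q) ∧
  (∀ q q'' (d₁ d₂ : ℝ≥0),
    S.delayTrans q (d₁ + d₂) q'' ↔ ∃ q', S.delayTrans q d₁ q' ∧ S.delayTrans q' d₂ q'')

/-- Input-enabledness: every state accepts every input of the alphabet. -/
def InputEnabled (S : TIOTS Act Q) : Prop :=
  ∀ q, ∀ a ∈ S.inputs, ∃ q', S.actTrans q a q'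

/-- A specification is an input-enabled TIOTS. -/
def IsSpecification (S : TIOTS Act Q) : Prop :=
  S.IsTIOTS ∧ S.InputEnabled

/-- A state allows independent progress if it can delay forever, or can
delay until an output is enabled. -/
def IndependentProgress (S : TIOTS Act Q) (q : Q) : Prop :=
  (∀ d : ℝ≥0, ∃ q', S.delayTrans q d q') ∨
  (∃ (d : ℝ≥0) (q' : Q), ∃ o ∈ S.outputs,
    S.delayTrans q d q' ∧ ∃ q'', S.actTrans q' o q'')

/-- Output urgency of a state: if an output is enabled, no positive delay is. -/
def OutputUrgent (S : TIOTS Act Q) (q : Q) : Prop :=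
  ∀ o ∈ S.outputs, ∀ (q' : Q) (d : ℝ≥0) (q'' : Q),
    S.actTrans q o q' → S.delayTrans q d q'' → d = 0

/-- An implementation is a specification all of whose states are
output urgent and allow independent progress. -/
def IsImplementation (P : TIOTS Act Q) : Prop :=
  P.IsSpecification ∧ ∀ q, P.OutputUrgent q ∧ P.IndependentProgress q

/-- A locally consistent specification: every state allows independent progress. -/
def LocallyConsistent (S : TIOTS Act Q) : Prop :=
  S.IsSpecification ∧ ∀ q, S.IndependentProgress q

/-- Refinement `S ≤ T` (including the side conditions on the alphabets). -/
def Refines (S : TIOTS Act Q1) (T : TIOTS Act Q2) : Prop :=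
  Disjoint S.inputs T.outputs ∧ Disjoint S.outputs T.inputs ∧
  S.inputs ⊆ T.inputs ∧ T.outputs ⊆ S.outputs ∧
  ∃ R : Q1 → Q2 → Prop,
    R S.init T.init ∧
    ∀ s t, R s t →
      (∀ a ∈ T.inputs ∩ S.inputs, ∀ t', T.actTrans t a t' →
        ∃ s', S.actTrans s a s' ∧ R s' t') ∧
      (∀ a ∈ T.inputs \ S.inputs, ∀ t', T.actTrans t a t' → R s t') ∧
      (∀ a ∈ S.outputs ∩ T.outputs, ∀ s', S.actTrans s a s' →
        ∃ t', T.actTrans t a t' ∧ R s' t') ∧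
      (∀ a ∈ S.outputs \ T.outputs, ∀ s', S.actTrans s a s' → R s' t) ∧
      (∀ (d : ℝ≥0) (s' : Q1), S.delayTrans s d s' →
        ∃ t', T.delayTrans t d t' ∧ R s' t')

/-- `Mod S P` : `P` belongs to `mod(S)`, i.e. `P` is an implementation over
the alphabet of `S` satisfying (refining) `S`. -/
def Mod (S : TIOTS Act Q1) (P : TIOTS Act Q2) : Prop :=
  P.IsImplementation ∧ P.inputs = S.inputs ∧ P.outputs = S.outputs ∧ P.Refines S

/-- The TIOTS obtained from `S` by replacing the initial state by `q`. -/
def withInit (S : TIOTS Act Q) (q : Q) : TIOTS Act Q := { S with init := q }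

/-- Reachability by finite sequences of action and delay transitions. -/
inductive Reach (S : TIOTS Act Q) : Q → Q → Prop where
  | refl (q : Q) : Reach S q q
  | act {q q' q'' : Q} (a : Act) : S.actTrans q a q' → Reach S q' q'' → Reach S q q''
  | delay {q q' q'' : Q} (d : ℝ≥0) : S.delayTrans q d q' → Reach S q' q'' → Reach S q q''

/-- The set of error states relative to a set `X`. -/
def errSet (S : TIOTS Act Q) (X : Set Q) : Set Q :=
  { q | (∃ d : ℝ≥0, ¬ ∃ q', S.delayTrans q d q') ∧
        ∀ (d : ℝ≥0), ∀ o ∈ S.outputs, ∀ q', S.delayTrans q d q' →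
          ((¬ ∃ q'', S.actTrans q' o q'') ∨ ∀ q'', S.actTrans q' o q'' → q'' ∈ X) }

/-- The operator `Θ` whose greatest fixpoint is the set of consistent states. -/
def Theta (S : TIOTS Act Q) (X : Set Q) : Set Q :=
  (Set.univ \ S.errSet (Set.univ \ X)) ∩
  { q | ∀ d : ℝ≥0,
      (∀ q', S.delayTrans q d q' →
        (q' ∈ X ∧ ∀ i ∈ S.inputs, ∃ q'', q'' ∈ X ∧ S.actTrans q' i q'')) ∨
      (∃ d' : ℝ≥0, d' ≤ d ∧ ∃ q' q'', q' ∈ X ∧ q'' ∈ X ∧ ∃ o ∈ S.outputs,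
        S.delayTrans q d' q' ∧ S.actTrans q' o q'' ∧
        ∀ i ∈ S.inputs, ∃ q''', q''' ∈ X ∧ S.actTrans q' i q''') }

/-- The set of consistent states: the greatest fixpoint of the monotone
operator `Θ`, given by Knaster–Tarski as the union of all postfixed points. -/
def consSet (S : TIOTS Act Q) : Set Q := ⋃₀ { X | X ⊆ S.Theta X }

/-- Adversarial pruning `S^Δ`: restrict the states to the consistent ones and
restrict the transition relation accordingly. -/
def prune (S : TIOTS Act Q) (h : S.init ∈ S.consSet) :
    TIOTS Act {q : Q // q ∈ S.consSet} where
  init := ⟨S.init, h⟩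
  inputs := S.inputs
  outputs := S.outputs
  actTrans := fun q a q' => S.actTrans q.1 a q'.1
  delayTrans := fun q d q' => S.delayTrans q.1 d q'.1

/-- Conjunction of TIOTSs. -/
def conj (S : TIOTS Act Q1) (T : TIOTS Act Q2) : TIOTS Act (Q1 × Q2) where
  init := (S.init, T.init)
  inputs := S.inputs ∪ T.inputs
  outputs := S.outputs ∪ T.outputs
  actTrans := fun q a q' =>
    (a ∈ S.acts ∩ T.acts ∧ S.actTrans q.1 a q'.1 ∧ T.actTrans q.2 a q'.2) ∨
    (a ∈ S.acts \ T.acts ∧ S.actTrans q.1 a q'.1 ∧ q'.2 = q.2) ∨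
    (a ∈ T.acts \ S.acts ∧ T.actTrans q.2 a q'.2 ∧ q'.1 = q.1)
  delayTrans := fun q d q' => S.delayTrans q.1 d q'.1 ∧ T.delayTrans q.2 d q'.2

/-- Parallel composition of TIOTSs. -/
def par (S : TIOTS Act Q1) (T : TIOTS Act Q2) : TIOTS Act (Q1 × Q2) where
  init := (S.init, T.init)
  inputs := (S.inputs \ T.outputs) ∪ (T.inputs \ S.outputs)
  outputs := S.outputs ∪ T.outputs
  actTrans := fun q a q' =>
    (a ∈ S.acts ∩ T.acts ∧ S.actTrans q.1 a q'.1 ∧ T.actTrans q.2 a q'.2) ∨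
    (a ∈ S.acts \ T.acts ∧ S.actTrans q.1 a q'.1 ∧ q'.2 = q.2) ∨
    (a ∈ T.acts \ S.acts ∧ T.actTrans q.2 a q'.2 ∧ q'.1 = q.1)
  delayTrans := fun q d q' => S.delayTrans q.1 d q'.1 ∧ T.delayTrans q.2 d q'.2

/-- States of the quotient: pairs of states, a universal state and an error state. -/
inductive QSt (Q1 Q2 : Type) where
  | st : Q1 → Q2 → QSt Q1 Q2
  | univ : QSt Q1 Q2
  | err : QSt Q1 Q2

/-- Action transitions of the quotient `T \\ S`. -/
def quotAct (T : TIOTS Act Q1) (S : TIOTS Act Q2) :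
    QSt Q1 Q2 → Act → QSt Q1 Q2 → Prop
  | QSt.st qT qS, a, QSt.st qT' qS' =>
      (a ∈ S.acts ∩ T.acts ∧ T.actTrans qT a qT' ∧ S.actTrans qS a qS') ∨
      (a ∈ S.acts \ T.acts ∧ S.actTrans qS a qS' ∧ qT' = qT) ∨
      (a ∈ T.acts \ S.acts ∧ T.actTrans qT a qT' ∧ qS' = qS)
  | QSt.st _ qS, a, QSt.univ => a ∈ S.outputs ∧ ¬ ∃ qS', S.actTrans qS a qS'
  | QSt.st qT qS, a, QSt.err =>
      a ∈ S.outputs ∩ T.outputs ∧ (¬ ∃ qT', T.actTrans qT a qT') ∧ ∃ qS', S.actTrans qS a qS'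
  | QSt.univ, a, QSt.univ =>
      a ∈ (T.inputs ∪ S.outputs) ∪ ((T.outputs \ S.outputs) ∪ (S.inputs \ T.inputs))
  | QSt.err, a, QSt.err => a ∈ T.inputs ∪ S.outputs
  | _, _, _ => False

/-- Delay transitions of the quotient `T \\ S`. -/
def quotDelay (T : TIOTS Act Q1) (S : TIOTS Act Q2) :
    QSt Q1 Q2 → ℝ≥0 → QSt Q1 Q2 → Prop
  | QSt.st qT qS, d, QSt.st qT' qS' => T.delayTrans qT d qT' ∧ S.delayTrans qS d qS'
  | QSt.st _ qS, d, QSt.univ => ¬ ∃ qS', S.delayTrans qS d qS'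
  | QSt.univ, _, QSt.univ => True
  | _, _, _ => False

/-- The quotient `T \\ S`. -/
def quot (T : TIOTS Act Q1) (S : TIOTS Act Q2) : TIOTS Act (QSt Q1 Q2) where
  init := QSt.st T.init S.init
  inputs := T.inputs ∪ S.outputs
  outputs := (T.outputs \ S.outputs) ∪ (S.inputs \ T.inputs)
  actTrans := T.quotAct S
  delayTrans := T.quotDelay S

end TIOTS

/-- Clock guards: Boolean formulas over atomic clock constraints `x ≺ n`. -/
inductive ClockGuard (C : Type) where
  | tt : ClockGuard C
  | ff : ClockGuard C
  | lt : C → ℕ → ClockGuard C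
  | le : C → ℕ → ClockGuard C
  | gt : C → ℕ → ClockGuard C
  | ge : C → ℕ → ClockGuard C
  | eq : C → ℕ → ClockGuard C
  | and : ClockGuard C → ClockGuard C → ClockGuard C
  | or : ClockGuard C → ClockGuard C → ClockGuard C
  | not : ClockGuard C → ClockGuard C

namespace ClockGuard

variable {C C' : Type}

/-- Satisfaction of a clock guard by a clock valuation. -/
def sat (v : C → ℝ≥0) : ClockGuard C → Prop
  | tt => True
  | ff => False
  | lt x n => v x < (n : ℝ≥0)
  | le x n => v x ≤ (n : ℝ≥0)
  | gt x n => (n : ℝ≥0) < v x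
  | ge x n => (n : ℝ≥0) ≤ v x
  | eq x n => v x = (n : ℝ≥0)
  | and g₁ g₂ => sat v g₁ ∧ sat v g₂
  | or g₁ g₂ => sat v g₁ ∨ sat v g₂
  | not g => ¬ sat v g

/-- Renaming of the clocks of a guard. -/
def map (f : C → C') : ClockGuard C → ClockGuard C'
  | tt => tt
  | ff => ff
  | lt x n => lt (f x) n
  | le x n => le (f x) n
  | gt x n => gt (f x) n
  | ge x n => ge (f x) n
  | eq x n => eq (f x) n
  | and g₁ g₂ => and (map f g₁) (map f g₂)
  | or g₁ g₂ => or (map f g₁) (map f g₂)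
  | not g => not (map f g)

end ClockGuard

/-- A Timed I/O Automaton over action type `Act`, location type `L`
and clock type `C`. -/
structure TIOA (Act L C : Type) where
  init : L
  inputs : Set Act
  outputs : Set Act
  edges : Set (L × Act × ClockGuard C × Set C × L)
  inv : L → ClockGuard C

namespace TIOA

variable {Act L C L1 L2 C1 C2 : Type}

/-- The alphabet (action set) of a TIOA. -/
def acts (A : TIOA Act L C) : Set Act := A.inputs ∪ A.outputs

open Classical in
/-- Reset the clocks in `c` to zero. -/
noncomputable def resetVal (v : C → ℝ≥0) (c : Set C) : C → ℝ≥0 :=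
  fun x => if x ∈ c then 0 else v x

/-- The semantics of a TIOA as a TIOTS. -/
noncomputable def sem (A : TIOA Act L C) : TIOTS Act (L × (C → ℝ≥0)) where
  init := (A.init, fun _ => 0)
  inputs := A.inputs
  outputs := A.outputs
  actTrans := fun q a q' =>
    ∃ g c, (q.1, a, g, c, q'.1) ∈ A.edges ∧ ClockGuard.sat q.2 g ∧
      q'.2 = resetVal q.2 c ∧ ClockGuard.sat q'.2 (A.inv q'.1)
  delayTrans := fun q d q' =>
    q'.1 = q.1 ∧ q'.2 = (fun x => q.2 x + d) ∧
    ClockGuard.sat q'.2 (A.inv q.1) ∧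
    ∀ d' : ℝ≥0, d' < d → ClockGuard.sat (fun x => q.2 x + d') (A.inv q.1)

/-- Conjunction of TIOAs (with disjoint clock sets, realized as a sum type). -/
def conjA (A : TIOA Act L1 C1) (B : TIOA Act L2 C2) :
    TIOA Act (L1 × L2) (C1 ⊕ C2) where
  init := (A.init, B.init)
  inputs := A.inputs ∪ B.inputs
  outputs := A.outputs ∪ B.outputs
  edges := { e |
    (∃ l1 l2 a g1 g2 c1 c2 l1' l2',
      e = ((l1, l2), a,
            ClockGuard.and (ClockGuard.map Sum.inl g1) (ClockGuard.map Sum.inr g2),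
            Sum.inl '' c1 ∪ Sum.inr '' c2, (l1', l2')) ∧
      a ∈ A.acts ∩ B.acts ∧ (l1, a, g1, c1, l1') ∈ A.edges ∧ (l2, a, g2, c2, l2') ∈ B.edges) ∨
    (∃ l1 l2 a g1 c1 l1',
      e = ((l1, l2), a, ClockGuard.map Sum.inl g1, Sum.inl '' c1, (l1', l2)) ∧
      a ∈ A.acts \ B.acts ∧ (l1, a, g1, c1, l1') ∈ A.edges) ∨
    (∃ l1 l2 a g2 c2 l2',
      e = ((l1, l2), a, ClockGuard.map Sum.inr g2, Sum.inr '' c2, (l1, l2')) ∧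
      a ∈ B.acts \ A.acts ∧ (l2, a, g2, c2, l2') ∈ B.edges) }
  inv := fun l =>
    ClockGuard.and (ClockGuard.map Sum.inl (A.inv l.1)) (ClockGuard.map Sum.inr (B.inv l.2))

/-- Parallel composition of TIOAs (with disjoint clock sets). -/
def parA (A : TIOA Act L1 C1) (B : TIOA Act L2 C2) :
    TIOA Act (L1 × L2) (C1 ⊕ C2) where
  init := (A.init, B.init)
  inputs := (A.inputs \ B.outputs) ∪ (B.inputs \ A.outputs)
  outputs := A.outputs ∪ B.outputs
  edges := { e |
    (∃ l1 l2 a g1 g2 c1 c2 l1' l2',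
      e = ((l1, l2), a,
            ClockGuard.and (ClockGuard.map Sum.inl g1) (ClockGuard.map Sum.inr g2),
            Sum.inl '' c1 ∪ Sum.inr '' c2, (l1', l2')) ∧
      a ∈ A.acts ∩ B.acts ∧ (l1, a, g1, c1, l1') ∈ A.edges ∧ (l2, a, g2, c2, l2') ∈ B.edges) ∨
    (∃ l1 l2 a g1 c1 l1',
      e = ((l1, l2), a, ClockGuard.map Sum.inl g1, Sum.inl '' c1, (l1', l2)) ∧
      a ∈ A.acts \ B.acts ∧ (l1, a, g1, c1, l1') ∈ A.edges) ∨
    (∃ l1 l2 a g2 c2 l2',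
      e = ((l1, l2), a, ClockGuard.map Sum.inr g2, Sum.inr '' c2, (l1, l2')) ∧
      a ∈ B.acts \ A.acts ∧ (l2, a, g2, c2, l2') ∈ B.edges) }
  inv := fun l =>
    ClockGuard.and (ClockGuard.map Sum.inl (A.inv l.1)) (ClockGuard.map Sum.inr (B.inv l.2))

/-- The canonical bijection between the states of `⟦A¹ ∧ A²⟧` (resp. `⟦A¹ ∥ A²⟧`)
and the states of `⟦A¹⟧ ∧ ⟦A²⟧` (resp. `⟦A¹⟧ ∥ ⟦A²⟧`):
`((l¹,l²), v) ↦ ((l¹, v∘inl), (l², v∘inr))`. -/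
def stateMap {L1 L2 C1 C2 : Type} (q : (L1 × L2) × ((C1 ⊕ C2) → ℝ≥0)) :
    (L1 × (C1 → ℝ≥0)) × (L2 × (C2 → ℝ≥0)) :=
  ((q.1.1, fun x => q.2 (Sum.inl x)), (q.1.2, fun x => q.2 (Sum.inr x)))

end TIOA

/-- If `S1` can output `o` from `p`, then the parallel composition can output
`o` from any state `(p, q)` (possibly synchronizing with `S2`). -/
lemma outStep1 {Act Q1 Q2 : Type} (S1 : TIOTS Act Q1) (S2 : TIOTS Act Q2)
    (hie2 : S2.InputEnabled) (hcomp : Disjoint S1.outputs S2.outputs)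
    {p : Q1} {o : Act} {p' : Q1} (ho : o ∈ S1.outputs) (h : S1.actTrans p o p')
    (q : Q2) : ∃ r, (S1.par S2).actTrans (p, q) o r := by
  by_cases hA : o ∈ S2.acts
  · have hno : o ∉ S2.outputs := fun hx => hcomp.le_bot ⟨ho, hx⟩
    have hin : o ∈ S2.inputs := hA.resolve_right hno
    obtain ⟨q', hq'⟩ := hie2 q o hin
    exact ⟨(p', q'), Or.inl ⟨⟨Or.inr ho, hA⟩, h, hq'⟩⟩
  · exact ⟨(p', q), Or.inr (Or.inl ⟨⟨Or.inr ho, hA⟩, h, rfl⟩)⟩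

/-- Symmetric version: `S2` outputs `o`. -/
lemma outStep2 {Act Q1 Q2 : Type} (S1 : TIOTS Act Q1) (S2 : TIOTS Act Q2)
    (hie1 : S1.InputEnabled) (hcomp : Disjoint S1.outputs S2.outputs)
    {q : Q2} {o : Act} {q' : Q2} (ho : o ∈ S2.outputs) (h : S2.actTrans q o q')
    (p : Q1) : ∃ r, (S1.par S2).actTrans (p, q) o r := by
  by_cases hA : o ∈ S1.acts
  · have hno : o ∉ S1.outputs := fun hx => hcomp.le_bot ⟨hx, ho⟩
    have hin : o ∈ S1.inputs := hA.resolve_right hno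
    obtain ⟨p', hp'⟩ := hie1 p o hin
    exact ⟨(p', q'), Or.inl ⟨⟨hA, Or.inr ho⟩, hp', h⟩⟩
  · exact ⟨(p, q'), Or.inr (Or.inr ⟨⟨Or.inr ho, hA⟩, h, rfl⟩)⟩

/-- The parallel composition of locally consistent composable
specifications is locally consistent. -/
theorem par_locallyConsistent {Act Q1 Q2 : Type}
    (S1 : TIOTS Act Q1) (S2 : TIOTS Act Q2)
    (h1 : S1.LocallyConsistent) (h2 : S2.LocallyConsistent)
    (hcomp : Disjoint S1.outputs S2.outputs) :
    (S1.par S2).LocallyConsistent := by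
  obtain ⟨⟨⟨hdis1, hlab1, hadet1, hddet1, hrefl1, hadd1⟩, hie1⟩, hip1⟩ := h1
  obtain ⟨⟨⟨hdis2, hlab2, hadet2, hddet2, hrefl2, hadd2⟩, hie2⟩, hip2⟩ := h2
  rw [Set.disjoint_left] at hdis1 hdis2
  refine ⟨⟨⟨?_, ?_, ?_, ?_, ?_, ?_⟩, ?_⟩, ?_⟩
  · -- disjointness of inputs and outputs
    rw [Set.disjoint_left]
    rintro a (⟨hi, hno⟩ | ⟨hi, hno⟩) (ho | ho)
    · exact hdis1 hi ho
    · exact hno ho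
    · exact hno ho
    · exact hdis2 hi ho
  · -- actions labelled by alphabet
    rintro q a q' (⟨⟨ha1, _⟩, _⟩ | ⟨⟨ha1, _⟩, _⟩ | ⟨⟨ha2, _⟩, _⟩)
    all_goals {
      first
      | (rcases ha1 with hi | ho
         · by_cases hx : a ∈ S2.outputs
           · exact Or.inr (Or.inr hx)
           · exact Or.inl (Or.inl ⟨hi, hx⟩)
         · exact Or.inr (Or.inl ho))
      | (rcases ha2 with hi | ho
         · by_cases hx : a ∈ S1.outputs
           · exact Or.inr (Or.inl hx)
           · exact Or.inl (Or.inr ⟨hi, hx⟩)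
         · exact Or.inr (Or.inr ho)) }
  · -- action determinism
    rintro q a q' q''
      (⟨⟨ha1, ha2⟩, t1, t2⟩ | ⟨⟨ha1, ha2⟩, t1, t2⟩ | ⟨⟨ha1, ha2⟩, t1, t2⟩)
      (⟨⟨hb1, hb2⟩, u1, u2⟩ | ⟨⟨hb1, hb2⟩, u1, u2⟩ | ⟨⟨hb1, hb2⟩, u1, u2⟩) <;>
      first
      | exact absurd ha2 hb2
      | exact absurd hb2 ha2
      | exact absurd ha1 hb1
      | exact absurd hb1 ha1
      | exact absurd ha1 hb2
      | exact absurd hb1 ha2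
      | exact absurd ha2 hb1
      | exact absurd hb2 ha1
      | exact Prod.ext (hadet1 _ _ _ _ t1 u1) (hadet2 _ _ _ _ t2 u2)
      | exact Prod.ext (hadet1 _ _ _ _ t1 u1) (t2.trans u2.symm)
      | exact Prod.ext (t2.trans u2.symm) (hadet2 _ _ _ _ t1 u1)
  · -- delay determinism
    rintro q d q' q'' ⟨t1, t2⟩ ⟨u1, u2⟩
    exact Prod.ext (hddet1 _ _ _ _ t1 u1) (hddet2 _ _ _ _ t2 u2)
  · -- time reflexivity
    exact fun q => ⟨hrefl1 q.1, hrefl2 q.2⟩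
  · -- time additivity
    intro q q'' d₁ d₂
    constructor
    · rintro ⟨t1, t2⟩
      obtain ⟨m1, hm1, hm1'⟩ := (hadd1 _ _ _ _).mp t1
      obtain ⟨m2, hm2, hm2'⟩ := (hadd2 _ _ _ _).mp t2
      exact ⟨(m1, m2), ⟨hm1, hm2⟩, hm1', hm2'⟩
    · rintro ⟨m, ⟨t1, t2⟩, u1, u2⟩
      exact ⟨(hadd1 _ _ _ _).mpr ⟨m.1, t1, u1⟩, (hadd2 _ _ _ _).mpr ⟨m.2, t2, u2⟩⟩
  · -- input-enabledness
    rintro q a (⟨hi, hno⟩ | ⟨hi, hno⟩)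
    · obtain ⟨p', hp'⟩ := hie1 q.1 a hi
      by_cases hA : a ∈ S2.acts
      · have hin : a ∈ S2.inputs := hA.resolve_right hno
        obtain ⟨q', hq'⟩ := hie2 q.2 a hin
        exact ⟨(p', q'), Or.inl ⟨⟨Or.inl hi, hA⟩, hp', hq'⟩⟩
      · exact ⟨(p', q.2), Or.inr (Or.inl ⟨⟨Or.inl hi, hA⟩, hp', rfl⟩)⟩
    · obtain ⟨q', hq'⟩ := hie2 q.2 a hi
      by_cases hA : a ∈ S1.acts
      · have hin : a ∈ S1.inputs := hA.resolve_right hno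
        obtain ⟨p', hp'⟩ := hie1 q.1 a hin
        exact ⟨(p', q'), Or.inl ⟨⟨hA, Or.inl hi⟩, hp', hq'⟩⟩
      · exact ⟨(q.1, q'), Or.inr (Or.inr ⟨⟨Or.inl hi, hA⟩, hq', rfl⟩)⟩
  · -- independent progress
    intro q
    rcases hip1 q.1 with hall1 | ⟨d1, p', o1, ho1, hdel1, p'', hact1⟩ <;>
      rcases hip2 q.2 with hall2 | ⟨d2, r', o2, ho2, hdel2, r'', hact2⟩
    · -- both delay forever
      left
      intro d
      obtain ⟨p', hp'⟩ := hall1 d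
      obtain ⟨r', hr'⟩ := hall2 d
      exact ⟨(p', r'), hp', hr'⟩
    · -- S1 delays forever, S2 has an output after d2
      right
      obtain ⟨p', hp'⟩ := hall1 d2
      obtain ⟨w, hw⟩ := outStep2 S1 S2 hie1 hcomp ho2 hact2 p'
      exact ⟨d2, (p', r'), o2, Or.inr ho2, ⟨hp', hdel2⟩, w, hw⟩
    · -- S2 delays forever, S1 has an output after d1
      right
      obtain ⟨r', hr'⟩ := hall2 d1
      obtain ⟨w, hw⟩ := outStep1 S1 S2 hie2 hcomp ho1 hact1 r'
      exact ⟨d1, (p', r'), o1, Or.inl ho1, ⟨hdel1, hr'⟩, w, hw⟩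
    · -- both have outputs: take the earlier one
      right
      rcases le_total d1 d2 with hle | hle
      · have h2' : S2.delayTrans q.2 (d1 + (d2 - d1)) r' := by
          rwa [add_tsub_cancel_of_le hle]
        obtain ⟨m, hm, -⟩ := (hadd2 _ _ _ _).mp h2'
        obtain ⟨w, hw⟩ := outStep1 S1 S2 hie2 hcomp ho1 hact1 m
        exact ⟨d1, (p', m), o1, Or.inl ho1, ⟨hdel1, hm⟩, w, hw⟩
      · have h1' : S1.delayTrans q.1 (d2 + (d1 - d2)) p' := by
          rwa [add_tsub_cancel_of_le hle]
        obtain ⟨m, hm, -⟩ := (hadd1 _ _ _ _).mp h1'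
        obtain ⟨w, hw⟩ := outStep2 S1 S2 hie1 hcomp ho2 hact2 m
        exact ⟨d2, (m, r'), o2, Or.inr ho2, ⟨hm, hdel2⟩, w, hw⟩
end

section
/- Correctness of quotient: let S and T be specifications with Act_o^S ∩ Act_i^T = ∅ (so the quotient T \\ S is defined), and let X be an implementation over the same alphabet as T \\ S (Act_i^X = Act_i^T ∪ Act_o^S and Act_o^X = (Act_o^T \ Act_o^S) ∪ (Act_i^S \ Act_i^T)). Then S and X are composable, so S ∥ X is defined, and S ∥ X ≤ T if and only if X ≤ T \\ S. -/
open scoped NNReal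

namespace QuotientCorrectAux

open TIOTS

/-- Relation used in the forward direction. -/
def fwdRel {QS QT QX : Type} (R : QS × QX → QT → Prop) : QX → QSt QT QS → Prop
  | x, QSt.st t s => R (s, x) t
  | _, QSt.univ => True
  | _, QSt.err => False

end QuotientCorrectAux

open QuotientCorrectAux in
/-- Correctness of the quotient:
`S ∥ X` is defined and `S ∥ X ≤ T` iff `X ≤ T \\ S`. -/
theorem quotient_correct {Act QS QT QX : Type}
    (S : TIOTS Act QS) (T : TIOTS Act QT) (X : TIOTS Act QX)
    (hS : S.IsSpecification) (hT : T.IsSpecification)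
    (hq : Disjoint S.outputs T.inputs)
    (hX : X.IsImplementation)
    (hXin : X.inputs = T.inputs ∪ S.outputs)
    (hXout : X.outputs = (T.outputs \ S.outputs) ∪ (S.inputs \ T.inputs)) :
    Disjoint S.outputs X.outputs ∧
      ((S.par X).Refines T ↔ X.Refines (T.quot S)) := by
  obtain ⟨⟨hSdisj, hSacts, hSdet, hSddet, hSrefl, hSadd⟩, hSie⟩ := hS
  obtain ⟨⟨hTdisj, hTacts, hTdet, hTddet, hTrefl, hTadd⟩, hTie⟩ := hT
  obtain ⟨⟨⟨hXdisj, hXacts, hXdet, hXddet, hXrefl, hXadd⟩, hXie⟩, -⟩ := hX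
  have hSoTi : ∀ a ∈ S.outputs, a ∉ T.inputs := fun a h => Set.disjoint_left.mp hq h
  have hSiSo : ∀ a ∈ S.inputs, a ∉ S.outputs := fun a h => Set.disjoint_left.mp hSdisj h
  have hTiTo : ∀ a ∈ T.inputs, a ∉ T.outputs := fun a h => Set.disjoint_left.mp hTdisj h
  have hSoXo : ∀ a ∈ S.outputs, a ∉ X.outputs := by
    intro a ha hb
    rw [hXout] at hb
    rcases hb with ⟨_, hb2⟩ | ⟨hb1, _⟩
    · exact hb2 ha
    · exact hSiSo a hb1 ha
  have hXoSo : ∀ a ∈ X.outputs, a ∉ S.outputs := fun a ha hb => hSoXo a hb ha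
  have hdisj1 : Disjoint S.outputs X.outputs := Set.disjoint_left.mpr fun {a} ha => hSoXo a ha
  -- memberships in acts
  have hSactsX : S.acts ⊆ X.acts := by
    intro a ha
    rcases ha with ha | ha
    · by_cases h : a ∈ T.inputs
      · exact Or.inl (by rw [hXin]; exact Or.inl h)
      · exact Or.inr (by rw [hXout]; exact Or.inr ⟨ha, h⟩)
    · exact Or.inl (by rw [hXin]; exact Or.inr ha)
  have hTactsX : T.acts ⊆ X.acts := by
    intro a ha
    rcases ha with ha | ha
    · exact Or.inl (by rw [hXin]; exact Or.inl ha)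
    · by_cases h : a ∈ S.outputs
      · exact Or.inl (by rw [hXin]; exact Or.inr h)
      · exact Or.inr (by rw [hXout]; exact Or.inl ⟨ha, h⟩)
  have hXinActs : X.inputs ⊆ X.acts := Set.subset_union_left
  have hXoutActs : X.outputs ⊆ X.acts := Set.subset_union_right
  -- membership in par inputs is in T.inputs
  have hParInTi : ∀ a ∈ (S.par X).inputs, a ∈ T.inputs := by
    intro a ha
    rcases ha with ⟨haSi, hanXo⟩ | ⟨haXi, hanSo⟩
    · by_contra hanTi
      exact hanXo (by rw [hXout]; exact Or.inr ⟨haSi, hanTi⟩)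
    · rw [hXin] at haXi
      rcases haXi with h | h
      · exact h
      · exact absurd h hanSo
  have hTiParIn : ∀ a ∈ T.inputs, a ∈ (S.par X).inputs := by
    intro a ha
    exact Or.inr ⟨by rw [hXin]; exact Or.inl ha, fun hc => hSoTi a hc ha⟩
  refine ⟨hdisj1, ?_, ?_⟩
  · -- forward : (S.par X) ≤ T → X ≤ (T.quot S)
    rintro ⟨-, -, -, -, R, hR0, hRc⟩
    refine ⟨?_, ?_, ?_, ?_, ?_⟩
    · show Disjoint X.inputs ((T.outputs \ S.outputs) ∪ (S.inputs \ T.inputs))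
      rw [← hXout]; exact hXdisj
    · show Disjoint X.outputs (T.inputs ∪ S.outputs)
      rw [← hXin]; exact hXdisj.symm
    · show X.inputs ⊆ T.inputs ∪ S.outputs
      rw [hXin]
    · show (T.outputs \ S.outputs) ∪ (S.inputs \ T.inputs) ⊆ X.outputs
      rw [hXout]
    · refine ⟨fwdRel R, hR0, ?_⟩
      intro x u hxu
      refine ⟨?_, ?_, ?_, ?_, ?_⟩
      · -- condition 1 : inputs
        rintro a ⟨haq, haXi⟩ u' hmove
        cases u with
        | err => exact absurd hxu (by simp [fwdRel])
        | univ =>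
          cases u' with
          | st t' s' => exact absurd hmove (by simp [TIOTS.quot, TIOTS.quotAct])
          | err => exact absurd hmove (by simp [TIOTS.quot, TIOTS.quotAct])
          | univ =>
            obtain ⟨x', hx'⟩ := hXie x a haXi
            exact ⟨x', hx', trivial⟩
        | st t s =>
          replace hxu : R (s, x) t := hxu
          obtain ⟨c1, c2, c3, c4, c5⟩ := hRc (s, x) t hxu
          rw [hXin] at haXi
          cases u' with
          | univ =>
            obtain ⟨x', hx'⟩ := hXie x a (by rw [hXin]; exact haXi)
            exact ⟨x', hx', trivial⟩
          | err =>
            obtain ⟨⟨haSo, haTo⟩, hnT, s0, hs0⟩ := hmove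
            obtain ⟨x0, hx0⟩ := hXie x a (by rw [hXin]; exact haXi)
            have hpm : (S.par X).actTrans (s, x) a (s0, x0) :=
              Or.inl ⟨⟨Or.inr haSo, hSactsX (Or.inr haSo)⟩, hs0, hx0⟩
            obtain ⟨t', ht', -⟩ := c3 a ⟨Or.inl haSo, haTo⟩ (s0, x0) hpm
            exact absurd ⟨t', ht'⟩ hnT
          | st t' s' =>
            rcases hmove with ⟨⟨haS, haT⟩, ht, hs⟩ | ⟨⟨haS, hanT⟩, hs, hteq⟩ |
                ⟨⟨haT, hanS⟩, ht, hseq⟩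
            · -- sync in quotient
              rcases haXi with haTi | haSo
              · obtain ⟨⟨p1, p2⟩, hp, hRp⟩ := c1 a ⟨haTi, hTiParIn a haTi⟩ t' ht
                rcases hp with ⟨-, hS1, hX1⟩ | ⟨⟨-, hnX⟩, -, -⟩ | ⟨⟨-, hnS⟩, -, -⟩
                · obtain rfl : p1 = s' := hSdet s a p1 s' hS1 hs
                  exact ⟨p2, hX1, hRp⟩
                · exact absurd (hSactsX haS) hnX
                · exact absurd haS hnS
              · have haTo : a ∈ T.outputs := by
                  rcases haT with h | h
                  · exact absurd h (hSoTi a haSo)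
                  · exact h
                obtain ⟨x0, hx0⟩ := hXie x a (by rw [hXin]; exact Or.inr haSo)
                have hpm : (S.par X).actTrans (s, x) a (s', x0) :=
                  Or.inl ⟨⟨haS, hSactsX haS⟩, hs, hx0⟩
                obtain ⟨t0, ht0, hR0'⟩ := c3 a ⟨Or.inl haSo, haTo⟩ (s', x0) hpm
                obtain rfl : t0 = t' := hTdet t a t0 t' ht0 ht
                exact ⟨x0, hx0, hR0'⟩
            · -- S alone in quotient
              have haSo : a ∈ S.outputs := by
                rcases haXi with h | h
                · exact absurd (Or.inl h) hanT
                · exact h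
              obtain ⟨x0, hx0⟩ := hXie x a (by rw [hXin]; exact Or.inr haSo)
              have hpm : (S.par X).actTrans (s, x) a (s', x0) :=
                Or.inl ⟨⟨haS, hSactsX haS⟩, hs, hx0⟩
              have hR4 := c4 a ⟨Or.inl haSo, fun hc => hanT (Or.inr hc)⟩ (s', x0) hpm
              refine ⟨x0, hx0, ?_⟩
              show R (s', x0) t'
              rw [hteq]; exact hR4
            · -- T alone in quotient
              have haTi : a ∈ T.inputs := by
                rcases haXi with h | h
                · exact h
                · exact absurd (Or.inr h) hanS
              obtain ⟨⟨p1, p2⟩, hp, hRp⟩ := c1 a ⟨haTi, hTiParIn a haTi⟩ t' ht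
              rcases hp with ⟨⟨hS1, -⟩, -, -⟩ | ⟨⟨hS1, -⟩, -, -⟩ | ⟨-, hX1, hpeq⟩
              · exact absurd hS1 hanS
              · exact absurd hS1 hanS
              · refine ⟨p2, hX1, ?_⟩
                have hpeq' : p1 = s := hpeq
                show R (s', p2) t'
                rw [hseq, ← hpeq']; exact hRp
      · -- condition 2 : vacuous
        rintro a ⟨ha1, ha2⟩ t' -
        exact absurd (by rw [hXin]; exact ha1) ha2
      · -- condition 3 : outputs
        rintro a ⟨haXo, -⟩ x' hx'
        cases u with
        | err => exact absurd hxu (by simp [fwdRel])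
        | univ =>
          refine ⟨TIOTS.QSt.univ, ?_, trivial⟩
          show a ∈ (T.inputs ∪ S.outputs) ∪ ((T.outputs \ S.outputs) ∪ (S.inputs \ T.inputs))
          exact Or.inr (by rw [← hXout]; exact haXo)
        | st t s =>
          replace hxu : R (s, x) t := hxu
          obtain ⟨c1, c2, c3, c4, c5⟩ := hRc (s, x) t hxu
          have haXo' : a ∈ (T.outputs \ S.outputs) ∪ (S.inputs \ T.inputs) := by
            rw [← hXout]; exact haXo
          by_cases haS : a ∈ S.acts
          · have haSi : a ∈ S.inputs := by
              rcases haS with h | h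
              · exact h
              · rcases haXo' with ⟨-, h2⟩ | ⟨h1, -⟩
                · exact absurd h h2
                · exact absurd h (hSiSo a h1)
            obtain ⟨s', hs'⟩ := hSie s a haSi
            have hpm : (S.par X).actTrans (s, x) a (s', x') :=
              Or.inl ⟨⟨Or.inl haSi, hXoutActs haXo⟩, hs', hx'⟩
            by_cases haTo : a ∈ T.outputs
            · obtain ⟨t', ht', hR'⟩ := c3 a ⟨Or.inr haXo, haTo⟩ (s', x') hpm
              exact ⟨TIOTS.QSt.st t' s', Or.inl ⟨⟨Or.inl haSi, Or.inr haTo⟩, ht', hs'⟩, hR'⟩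
            · have hanTi : a ∉ T.inputs := by
                rcases haXo' with ⟨h1, -⟩ | ⟨-, h2⟩
                · exact absurd h1 haTo
                · exact h2
              have hR4 := c4 a ⟨Or.inr haXo, haTo⟩ (s', x') hpm
              refine ⟨TIOTS.QSt.st t s', Or.inr (Or.inl ⟨⟨Or.inl haSi, ?_⟩, hs', rfl⟩), hR4⟩
              rintro (h | h)
              · exact hanTi h
              · exact haTo h
          · have haTo : a ∈ T.outputs := by
              rcases haXo' with ⟨h1, -⟩ | ⟨h1, -⟩
              · exact h1
              · exact absurd (Or.inl h1) haS
            have hpm : (S.par X).actTrans (s, x) a (s, x') :=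
              Or.inr (Or.inr ⟨⟨hXoutActs haXo, haS⟩, hx', rfl⟩)
            obtain ⟨t', ht', hR'⟩ := c3 a ⟨Or.inr haXo, haTo⟩ (s, x') hpm
            exact ⟨TIOTS.QSt.st t' s, Or.inr (Or.inr ⟨⟨Or.inr haTo, haS⟩, ht', rfl⟩), hR'⟩
      · -- condition 4 : vacuous
        rintro a ⟨ha1, ha2⟩ x' -
        refine absurd ?_ ha2
        show a ∈ T.outputs \ S.outputs ∪ S.inputs \ T.inputs
        rw [← hXout]; exact ha1
      · -- condition 5 : delays
        intro d x' hx'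
        cases u with
        | err => exact absurd hxu (by simp [fwdRel])
        | univ => exact ⟨TIOTS.QSt.univ, trivial, trivial⟩
        | st t s =>
          replace hxu : R (s, x) t := hxu
          obtain ⟨c1, c2, c3, c4, c5⟩ := hRc (s, x) t hxu
          by_cases hd : ∃ s', S.delayTrans s d s'
          · obtain ⟨s', hs'⟩ := hd
            obtain ⟨t', ht', hR'⟩ := c5 d (s', x') ⟨hs', hx'⟩
            exact ⟨TIOTS.QSt.st t' s', ⟨ht', hs'⟩, hR'⟩
          · exact ⟨TIOTS.QSt.univ, hd, trivial⟩
  · -- backward : X ≤ (T.quot S) → (S.par X) ≤ T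
    rintro ⟨-, -, -, -, R, hR0, hRc⟩
    refine ⟨Set.disjoint_left.mpr fun {a} ha => hTiTo a (hParInTi a ha), ?_, hParInTi, ?_, ?_⟩
    · refine Set.disjoint_left.mpr fun {a} ha => ?_
      rcases ha with h | h
      · exact hSoTi a h
      · rw [hXout] at h
        rcases h with ⟨h1, -⟩ | ⟨-, h2⟩
        · exact fun hc => hTiTo a hc h1
        · exact h2
    · intro a ha
      by_cases h : a ∈ S.outputs
      · exact Or.inl h
      · exact Or.inr (by rw [hXout]; exact Or.inl ⟨ha, h⟩)
    · refine ⟨fun p t => R p.2 (TIOTS.QSt.st t p.1), hR0, ?_⟩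
      rintro ⟨s, x⟩ t hpt
      obtain ⟨c1, c2, c3, c4, c5⟩ := hRc x (TIOTS.QSt.st t s) hpt
      refine ⟨?_, ?_, ?_, ?_, ?_⟩
      · -- condition 1 : inputs
        rintro a ⟨haTi, -⟩ t' ht'
        have haXi : a ∈ X.inputs := by rw [hXin]; exact Or.inl haTi
        have hamem : a ∈ (T.quot S).inputs ∩ X.inputs := ⟨Or.inl haTi, haXi⟩
        by_cases haS : a ∈ S.acts
        · have haSi : a ∈ S.inputs := by
            rcases haS with h | h
            · exact h
            · exact absurd haTi (hSoTi a h)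
          obtain ⟨s', hs'⟩ := hSie s a haSi
          have hqm : (T.quot S).actTrans (TIOTS.QSt.st t s) a (TIOTS.QSt.st t' s') :=
            Or.inl ⟨⟨haS, Or.inl haTi⟩, ht', hs'⟩
          obtain ⟨x', hx', hRx'⟩ := c1 a hamem (TIOTS.QSt.st t' s') hqm
          exact ⟨(s', x'), Or.inl ⟨⟨haS, hXinActs haXi⟩, hs', hx'⟩, hRx'⟩
        · have hqm : (T.quot S).actTrans (TIOTS.QSt.st t s) a (TIOTS.QSt.st t' s) :=
            Or.inr (Or.inr ⟨⟨Or.inl haTi, haS⟩, ht', rfl⟩)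
          obtain ⟨x', hx', hRx'⟩ := c1 a hamem (TIOTS.QSt.st t' s) hqm
          exact ⟨(s, x'), Or.inr (Or.inr ⟨⟨hXinActs haXi, haS⟩, hx', rfl⟩), hRx'⟩
      · -- condition 2 : vacuous
        rintro a ⟨ha1, ha2⟩ t' -
        exact absurd (hTiParIn a ha1) ha2
      · -- condition 3 : outputs matched
        rintro a ⟨haPo, haTo⟩ ⟨s', x'⟩ hp
        rcases hp with ⟨⟨haS, haX⟩, hs, hx⟩ | ⟨⟨haS, hanX⟩, -, -⟩ | ⟨⟨haX, hanS⟩, hx, heq⟩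
        · by_cases haXo : a ∈ X.outputs
          · have hamem : a ∈ X.outputs ∩ (T.quot S).outputs :=
              ⟨haXo, show a ∈ T.outputs \ S.outputs ∪ S.inputs \ T.inputs by
                rw [← hXout]; exact haXo⟩
            obtain ⟨u'', hq'', hR''⟩ := c3 a hamem x' hx
            cases u'' with
            | st t2 s2 =>
              rcases hq'' with ⟨-, ht2, hs2⟩ | ⟨⟨-, hnT⟩, -, -⟩ | ⟨⟨-, hnS⟩, -, -⟩
              · obtain rfl : s2 = s' := hSdet s a s2 s' hs2 hs
                exact ⟨t2, ht2, hR''⟩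
              · exact absurd (Or.inr haTo) hnT
              · exact absurd haS hnS
            | univ => exact absurd hq''.1 (hXoSo a haXo)
            | err => exact absurd hq''.1.1 (hXoSo a haXo)
          · have haSo : a ∈ S.outputs := by
              have := hXinActs.trans (le_refl _)
              rcases haX with h | h
              · rw [hXin] at h
                rcases h with h | h
                · exact absurd haTo (hTiTo a h)
                · exact h
              · exact absurd h haXo
            by_cases hTmv : ∃ t0, T.actTrans t a t0
            · obtain ⟨t0, ht0⟩ := hTmv
              have hqm : (T.quot S).actTrans (TIOTS.QSt.st t s) a (TIOTS.QSt.st t0 s') :=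
                Or.inl ⟨⟨haS, Or.inr haTo⟩, ht0, hs⟩
              obtain ⟨x2, hx2, hR2⟩ :=
                c1 a ⟨Or.inr haSo, by rw [hXin]; exact Or.inr haSo⟩ (TIOTS.QSt.st t0 s') hqm
              obtain rfl : x2 = x' := hXdet x a x2 x' hx2 hx
              exact ⟨t0, ht0, hR2⟩
            · have hqm : (T.quot S).actTrans (TIOTS.QSt.st t s) a TIOTS.QSt.err :=
                ⟨⟨haSo, haTo⟩, hTmv, ⟨s', hs⟩⟩
              obtain ⟨x2, -, hR2⟩ :=
                c1 a ⟨Or.inr haSo, by rw [hXin]; exact Or.inr haSo⟩ TIOTS.QSt.err hqm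
              obtain ⟨-, -, -, -, c5'⟩ := hRc x2 TIOTS.QSt.err hR2
              obtain ⟨u, hu, -⟩ := c5' 0 x2 (hXrefl x2)
              cases u <;> exact hu.elim
        · exact absurd (hSactsX haS) hanX
        · obtain rfl : s' = s := heq
          have haXo : a ∈ X.outputs := by
            rw [hXout]
            exact Or.inl ⟨haTo, fun c => hanS (Or.inr c)⟩
          have hamem : a ∈ X.outputs ∩ (T.quot S).outputs :=
            ⟨haXo, show a ∈ T.outputs \ S.outputs ∪ S.inputs \ T.inputs by
                rw [← hXout]; exact haXo⟩
          obtain ⟨u'', hq'', hR''⟩ := c3 a hamem x' hx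
          cases u'' with
          | st t2 s2 =>
            rcases hq'' with ⟨⟨hS1, -⟩, -, -⟩ | ⟨⟨hS1, -⟩, -, -⟩ | ⟨-, ht2, hs2eq⟩
            · exact absurd hS1 hanS
            · exact absurd hS1 hanS
            · have hs2eq' : s2 = s' := hs2eq
              subst hs2eq'
              exact ⟨t2, ht2, hR''⟩
          | univ => exact absurd hq''.1 (hXoSo a haXo)
          | err => exact absurd hq''.1.1 (hXoSo a haXo)
      · -- condition 4 : unmatched outputs
        rintro a ⟨haPo, hanTo⟩ ⟨s', x'⟩ hp
        rcases hp with ⟨⟨haS, haX⟩, hs, hx⟩ | ⟨⟨haS, hanX⟩, -, -⟩ | ⟨⟨haX, hanS⟩, hx, heq⟩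
        · by_cases haXo : a ∈ X.outputs
          · have hanT : a ∉ T.acts := by
              have haXo' : a ∈ (T.outputs \ S.outputs) ∪ (S.inputs \ T.inputs) := by
                rw [← hXout]; exact haXo
              rintro (h | h)
              · rcases haXo' with ⟨-, -⟩ | ⟨-, h2⟩
                · exact hTiTo a h (by
                    rcases (show a ∈ (T.outputs \ S.outputs) ∪ (S.inputs \ T.inputs) by
                      rw [← hXout]; exact haXo) with ⟨h1, -⟩ | ⟨-, h2'⟩
                    · exact h1
                    · exact absurd h h2')
                · exact h2 h
              · exact hanTo h
            have hamem : a ∈ X.outputs ∩ (T.quot S).outputs :=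
              ⟨haXo, show a ∈ T.outputs \ S.outputs ∪ S.inputs \ T.inputs by
                rw [← hXout]; exact haXo⟩
            obtain ⟨u'', hq'', hR''⟩ := c3 a hamem x' hx
            cases u'' with
            | st t2 s2 =>
              rcases hq'' with ⟨⟨-, hT1⟩, -, -⟩ | ⟨-, hs2, ht2eq⟩ | ⟨⟨hT1, -⟩, -, -⟩
              · exact absurd hT1 hanT
              · obtain rfl : t2 = t := ht2eq
                obtain rfl : s2 = s' := hSdet s a s2 s' hs2 hs
                exact hR''
              · exact absurd hT1 hanT
            | univ => exact absurd hq''.1 (hXoSo a haXo)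
            | err => exact absurd hq''.1.1 (hXoSo a haXo)
          · have haSo : a ∈ S.outputs := by
              rcases haPo with h | h
              · exact h
              · exact absurd h haXo
            have hanT : a ∉ T.acts := by
              rintro (h | h)
              · exact hSoTi a haSo h
              · exact hanTo h
            have hqm : (T.quot S).actTrans (TIOTS.QSt.st t s) a (TIOTS.QSt.st t s') :=
              Or.inr (Or.inl ⟨⟨haS, hanT⟩, hs, rfl⟩)
            obtain ⟨x2, hx2, hR2⟩ :=
              c1 a ⟨Or.inr haSo, by rw [hXin]; exact Or.inr haSo⟩ (TIOTS.QSt.st t s') hqm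
            obtain rfl : x2 = x' := hXdet x a x2 x' hx2 hx
            exact hR2
        · exact absurd (hSactsX haS) hanX
        · exfalso
          have haXo : a ∈ X.outputs := by
            rcases haPo with h | h
            · exact absurd (Or.inr h) hanS
            · exact h
          rw [hXout] at haXo
          rcases haXo with ⟨h1, -⟩ | ⟨h1, -⟩
          · exact hanTo h1
          · exact hanS (Or.inl h1)
      · -- condition 5 : delays
        rintro d ⟨s', x'⟩ ⟨hds, hdx⟩
        obtain ⟨u'', hq'', hR''⟩ := c5 d x' hdx
        cases u'' with
        | st t2 s2 =>
          obtain ⟨hdt, hds2⟩ := hq''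
          obtain rfl : s2 = s' := hSddet s d s2 s' hds2 hds
          exact ⟨t2, hdt, hR''⟩
        | univ => exact absurd ⟨s', hds⟩ hq''
        | err => exact hq''.elim
end

section
/- Shared-action transitions commute with conjunction of TIOAs: let A^1 and A^2 be TIOAs with Act_i^1 ∩ Act_o^2 = ∅, Act_o^1 ∩ Act_i^2 = ∅ and disjoint clock sets. Identify the states of X = ⟦A^1 ∧ A^2⟧ and Y = ⟦A^1⟧ ∧ ⟦A^2⟧ via the canonical bijection ((l^1,l^2), v) ↔ ((l^1, v|_{Clk^1}), (l^2, v|_{Clk^2})). Then for every action a ∈ Act^1 ∩ Act^2 and all states q1, q2, one has q1 →a q2 in X if and only if q1 →a q2 in Y. -/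
open scoped NNReal

lemma sat_map_aux {C C' : Type} (f : C → C') (v : C' → ℝ≥0) (g : ClockGuard C) :
    ClockGuard.sat v (ClockGuard.map f g) ↔ ClockGuard.sat (fun x => v (f x)) g := by
  induction g <;> simp [ClockGuard.map, ClockGuard.sat, *]

lemma resetVal_inl_aux {C1 C2 : Type} (v : (C1 ⊕ C2) → ℝ≥0) (c1 : Set C1) (c2 : Set C2)
    (x : C1) :
    TIOA.resetVal v (Sum.inl '' c1 ∪ Sum.inr '' c2) (Sum.inl x)
      = TIOA.resetVal (fun y => v (Sum.inl y)) c1 x := by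
  have h : Sum.inl x ∈ Sum.inl '' c1 ∪ Sum.inr '' c2 ↔ x ∈ c1 := by simp
  unfold TIOA.resetVal
  by_cases hx : x ∈ c1 <;> simp [h, hx]

lemma resetVal_inr_aux {C1 C2 : Type} (v : (C1 ⊕ C2) → ℝ≥0) (c1 : Set C1) (c2 : Set C2)
    (x : C2) :
    TIOA.resetVal v (Sum.inl '' c1 ∪ Sum.inr '' c2) (Sum.inr x)
      = TIOA.resetVal (fun y => v (Sum.inr y)) c2 x := by
  have h : Sum.inr x ∈ Sum.inl '' c1 ∪ Sum.inr '' c2 ↔ x ∈ c2 := by simp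
  unfold TIOA.resetVal
  by_cases hx : x ∈ c2 <;> simp [h, hx]

/-- Shared-action transitions commute with conjunction of TIOAs. -/
theorem conjA_sem_shared_iff {Act L1 L2 C1 C2 : Type}
    (A : TIOA Act L1 C1) (B : TIOA Act L2 C2)
    (h1 : Disjoint A.inputs B.outputs) (h2 : Disjoint A.outputs B.inputs)
    (a : Act) (ha : a ∈ A.acts ∩ B.acts)
    (q1 q2 : (L1 × L2) × ((C1 ⊕ C2) → ℝ≥0)) :
    ((A.conjA B).sem).actTrans q1 a q2 ↔
      ((A.sem).conj (B.sem)).actTrans (TIOA.stateMap q1) a (TIOA.stateMap q2) := by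
  obtain ⟨haA, haB⟩ := ha
  constructor
  · rintro ⟨g, c, hedge, hsat, hreset, hinv⟩
    rcases hedge with
      ⟨l1, l2, a', g1, g2, c1, c2, l1', l2', heq, _, hA, hB⟩ |
      ⟨l1, l2, a', g1, c1, l1', heq, ha', _⟩ |
      ⟨l1, l2, a', g2, c2, l2', heq, ha', _⟩
    · obtain ⟨h11, h12, h13, h14, h15⟩ :
          q1.1 = (l1, l2) ∧ a = a' ∧
          g = ClockGuard.and (ClockGuard.map Sum.inl g1) (ClockGuard.map Sum.inr g2) ∧
          c = Sum.inl '' c1 ∪ Sum.inr '' c2 ∧ q2.1 = (l1', l2') := by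
        simpa using heq
      subst h12 h13 h14
      refine Or.inl ⟨⟨haA, haB⟩, ?_, ?_⟩
      · refine ⟨g1, c1, ?_, ?_, ?_, ?_⟩
        · show (q1.1.1, a, g1, c1, q2.1.1) ∈ A.edges
          rw [h11, h15]; exact hA
        · exact (sat_map_aux Sum.inl q1.2 g1).mp hsat.1
        · funext x
          rw [show (TIOA.stateMap q2).1.2 x = q2.2 (Sum.inl x) from rfl, hreset]
          exact resetVal_inl_aux _ _ _ x
        · have := hinv.1
          rw [sat_map_aux] at this
          simpa [h15, TIOA.stateMap] using this
      · refine ⟨g2, c2, ?_, ?_, ?_, ?_⟩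
        · show (q1.1.2, a, g2, c2, q2.1.2) ∈ B.edges
          rw [h11, h15]; exact hB
        · exact (sat_map_aux Sum.inr q1.2 g2).mp hsat.2
        · funext x
          rw [show (TIOA.stateMap q2).2.2 x = q2.2 (Sum.inr x) from rfl, hreset]
          exact resetVal_inr_aux _ _ _ x
        · have := hinv.2
          rw [sat_map_aux] at this
          simpa [h15, TIOA.stateMap] using this
    · have h12 : a = a' := congrArg (fun p => p.2.1) heq
      exact absurd haB (h12 ▸ ha'.2)
    · have h12 : a = a' := congrArg (fun p => p.2.1) heq
      exact absurd haA (h12 ▸ ha'.2)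
  · rintro (⟨_, ⟨g1, c1, hA, hsat1, hres1, hinv1⟩, ⟨g2, c2, hB, hsat2, hres2, hinv2⟩⟩ |
      ⟨⟨_, hna⟩, _, _⟩ | ⟨⟨_, hna⟩, _, _⟩)
    · refine ⟨ClockGuard.and (ClockGuard.map Sum.inl g1) (ClockGuard.map Sum.inr g2),
        Sum.inl '' c1 ∪ Sum.inr '' c2, ?_, ?_, ?_, ?_⟩
      · exact Or.inl ⟨q1.1.1, q1.1.2, a, g1, g2, c1, c2, q2.1.1, q2.1.2,
          by simp, ⟨haA, haB⟩, hA, hB⟩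
      · exact ⟨(sat_map_aux Sum.inl q1.2 g1).mpr hsat1,
          (sat_map_aux Sum.inr q1.2 g2).mpr hsat2⟩
      · funext x
        cases x with
        | inl x =>
          rw [resetVal_inl_aux]
          exact congrFun hres1 x
        | inr x =>
          rw [resetVal_inr_aux]
          exact congrFun hres2 x
      · exact ⟨(sat_map_aux Sum.inl q2.2 _).mpr hinv1,
          (sat_map_aux Sum.inr q2.2 _).mpr hinv2⟩
    · exact absurd haB hna
    · exact absurd haA hna
end

section
/- Conjunction commutes with semantics up to adversarial pruning: let A^1 and A^2 be TIOAs with Act_i^1 ∩ Act_o^2 = ∅, Act_o^1 ∩ Act_i^2 = ∅ and disjoint clock sets. Identifying states via the canonical bijection ((l^1,l^2), v) ↔ ((l^1, v|_{Clk^1}), (l^2, v|_{Clk^2})), the adversarially pruned TIOTSs (⟦A^1 ∧ A^2⟧)^Δ and (⟦A^1⟧ ∧ ⟦A^2⟧)^Δ are equal: they have the same set of states, the same initial state, the same action sets with the same input/output partition, and the same transition relation. -/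
open scoped NNReal

namespace ConjHelper

open TIOTS TIOA

variable {Act L1 L2 C1 C2 : Type}

lemma sat_map {C C' : Type} (f : C → C') (v : C' → ℝ≥0) (g : ClockGuard C) :
    ClockGuard.sat v (g.map f) ↔ ClockGuard.sat (fun x => v (f x)) g := by
  induction g <;> simp [ClockGuard.sat, ClockGuard.map, *]

lemma sat_add_zero {C : Type} (v : C → ℝ≥0) (g : ClockGuard C) :
    ClockGuard.sat (fun x => v x + 0) g ↔ ClockGuard.sat v g := by
  rw [show (fun x => v x + (0:ℝ≥0)) = v from funext fun x => add_zero _]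

/-- The inverse of `stateMap`. -/
def tm (y : (L1 × (C1 → ℝ≥0)) × (L2 × (C2 → ℝ≥0))) :
    (L1 × L2) × ((C1 ⊕ C2) → ℝ≥0) :=
  ((y.1.1, y.2.1), Sum.elim y.1.2 y.2.2)

lemma sm_tm (y : (L1 × (C1 → ℝ≥0)) × (L2 × (C2 → ℝ≥0))) :
    TIOA.stateMap (tm y) = y := rfl

lemma tm_sm (q : (L1 × L2) × ((C1 ⊕ C2) → ℝ≥0)) : tm (TIOA.stateMap q) = q :=
  Prod.ext rfl (funext fun x => by cases x <;> rfl)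

lemma reset_union_inl (v : (C1 ⊕ C2) → ℝ≥0) (c1 : Set C1) (c2 : Set C2) (x : C1) :
    TIOA.resetVal v (Sum.inl '' c1 ∪ Sum.inr '' c2) (Sum.inl x) =
      TIOA.resetVal (fun y => v (Sum.inl y)) c1 x := by
  unfold TIOA.resetVal
  by_cases h : x ∈ c1 <;> simp [h]

lemma reset_union_inr (v : (C1 ⊕ C2) → ℝ≥0) (c1 : Set C1) (c2 : Set C2) (x : C2) :
    TIOA.resetVal v (Sum.inl '' c1 ∪ Sum.inr '' c2) (Sum.inr x) =
      TIOA.resetVal (fun y => v (Sum.inr y)) c2 x := by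
  unfold TIOA.resetVal
  by_cases h : x ∈ c2 <;> simp [h]

lemma reset_inlimg_inl (v : (C1 ⊕ C2) → ℝ≥0) (c1 : Set C1) (x : C1) :
    TIOA.resetVal v (Sum.inl '' c1) (Sum.inl x) =
      TIOA.resetVal (fun y => v (Sum.inl y)) c1 x := by
  unfold TIOA.resetVal
  by_cases h : x ∈ c1 <;> simp [h]

lemma reset_inlimg_inr (v : (C1 ⊕ C2) → ℝ≥0) (c1 : Set C1) (x : C2) :
    TIOA.resetVal v (Sum.inl '' c1) (Sum.inr x) = v (Sum.inr x) := by
  unfold TIOA.resetVal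
  simp

lemma reset_inrimg_inr (v : (C1 ⊕ C2) → ℝ≥0) (c2 : Set C2) (x : C2) :
    TIOA.resetVal v (Sum.inr '' c2) (Sum.inr x) =
      TIOA.resetVal (fun y => v (Sum.inr y)) c2 x := by
  unfold TIOA.resetVal
  by_cases h : x ∈ c2 <;> simp [h]

lemma reset_inrimg_inl (v : (C1 ⊕ C2) → ℝ≥0) (c2 : Set C2) (x : C1) :
    TIOA.resetVal v (Sum.inr '' c2) (Sum.inl x) = v (Sum.inl x) := by
  unfold TIOA.resetVal
  simp

/-- Both invariants hold in a (product) state. -/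
def P2 (A : TIOA Act L1 C1) (B : TIOA Act L2 C2)
    (y : (L1 × (C1 → ℝ≥0)) × (L2 × (C2 → ℝ≥0))) : Prop :=
  ClockGuard.sat y.1.2 (A.inv y.1.1) ∧ ClockGuard.sat y.2.2 (B.inv y.2.1)

variable (A : TIOA Act L1 C1) (B : TIOA Act L2 C2)

lemma delay_iff (q q' : (L1 × L2) × ((C1 ⊕ C2) → ℝ≥0)) (d : ℝ≥0) :
    ((A.conjA B).sem).delayTrans q d q' ↔
      ((A.sem).conj (B.sem)).delayTrans (TIOA.stateMap q) d (TIOA.stateMap q') := by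
  constructor
  · rintro ⟨h1, h2, ⟨h3a, h3b⟩, h4⟩
    exact ⟨⟨congrArg (fun p : L1 × L2 => p.1) h1,
        funext fun x => congrFun h2 (Sum.inl x),
        (sat_map Sum.inl q'.2 (A.inv q.1.1)).mp h3a,
        fun d' hd' =>
          (sat_map Sum.inl (fun x => q.2 x + d') (A.inv q.1.1)).mp (h4 d' hd').1⟩,
      ⟨congrArg (fun p : L1 × L2 => p.2) h1,
        funext fun x => congrFun h2 (Sum.inr x),
        (sat_map Sum.inr q'.2 (B.inv q.1.2)).mp h3b,
        fun d' hd' =>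
          (sat_map Sum.inr (fun x => q.2 x + d') (B.inv q.1.2)).mp (h4 d' hd').2⟩⟩
  · rintro ⟨⟨a1, a2, a3, a4⟩, ⟨b1, b2, b3, b4⟩⟩
    refine ⟨Prod.ext a1 b1, funext fun x => ?_,
      ⟨(sat_map Sum.inl q'.2 (A.inv q.1.1)).mpr a3,
        (sat_map Sum.inr q'.2 (B.inv q.1.2)).mpr b3⟩,
      fun d' hd' =>
        ⟨(sat_map Sum.inl (fun x => q.2 x + d') (A.inv q.1.1)).mpr (a4 d' hd'),
          (sat_map Sum.inr (fun x => q.2 x + d') (B.inv q.1.2)).mpr (b4 d' hd')⟩⟩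
    cases x with
    | inl x => exact congrFun a2 x
    | inr x => exact congrFun b2 x

lemma act_fwd {q q' : (L1 × L2) × ((C1 ⊕ C2) → ℝ≥0)} {a : Act}
    (h : ((A.conjA B).sem).actTrans q a q') :
    ((A.sem).conj (B.sem)).actTrans (TIOA.stateMap q) a (TIOA.stateMap q') := by
  obtain ⟨⟨ql1, ql2⟩, qv⟩ := q
  obtain ⟨⟨ql1', ql2'⟩, qv'⟩ := q'
  obtain ⟨g, c, hedge, hsat, hreset, hinv⟩ := h
  rcases hedge with ⟨l1, l2, a', g1, g2, c1, c2, l1', l2', heq, hacts, hA, hB⟩ |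
    ⟨l1, l2, a', g1, c1, l1', heq, hacts, hA⟩ |
    ⟨l1, l2, a', g2, c2, l2', heq, hacts, hB⟩
  · simp only [Prod.mk.injEq] at heq
    obtain ⟨⟨e1, e2⟩, e3, e4, e5, e6, e7⟩ := heq
    subst e1; subst e2; subst e3; subst e4; subst e5; subst e6; subst e7
    obtain ⟨hsA, hsB⟩ := hsat
    obtain ⟨hiA, hiB⟩ := hinv
    exact Or.inl ⟨hacts,
      ⟨g1, c1, hA, (sat_map Sum.inl qv g1).mp hsA,
        funext fun x => (congrFun hreset (Sum.inl x)).trans (reset_union_inl qv c1 c2 x),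
        (sat_map Sum.inl qv' (A.inv ql1')).mp hiA⟩,
      ⟨g2, c2, hB, (sat_map Sum.inr qv g2).mp hsB,
        funext fun x => (congrFun hreset (Sum.inr x)).trans (reset_union_inr qv c1 c2 x),
        (sat_map Sum.inr qv' (B.inv ql2')).mp hiB⟩⟩
  · simp only [Prod.mk.injEq] at heq
    obtain ⟨⟨e1, e2⟩, e3, e4, e5, e6, e7⟩ := heq
    subst e1; subst e2; subst e3; subst e4; subst e5; subst e6; subst e7
    obtain ⟨hiA, hiB⟩ := hinv
    exact Or.inr (Or.inl ⟨hacts,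
      ⟨g1, c1, hA, (sat_map Sum.inl qv g1).mp hsat,
        funext fun x => (congrFun hreset (Sum.inl x)).trans (reset_inlimg_inl qv c1 x),
        (sat_map Sum.inl qv' (A.inv ql1')).mp hiA⟩,
      Prod.ext rfl (funext fun x =>
        (congrFun hreset (Sum.inr x)).trans (reset_inlimg_inr qv c1 x))⟩)
  · simp only [Prod.mk.injEq] at heq
    obtain ⟨⟨e1, e2⟩, e3, e4, e5, e6, e7⟩ := heq
    subst e1; subst e2; subst e3; subst e4; subst e5; subst e6; subst e7
    obtain ⟨hiA, hiB⟩ := hinv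
    exact Or.inr (Or.inr ⟨hacts,
      ⟨g2, c2, hB, (sat_map Sum.inr qv g2).mp hsat,
        funext fun x => (congrFun hreset (Sum.inr x)).trans (reset_inrimg_inr qv c2 x),
        (sat_map Sum.inr qv' (B.inv ql2')).mp hiB⟩,
      Prod.ext rfl (funext fun x =>
        (congrFun hreset (Sum.inl x)).trans (reset_inrimg_inl qv c2 x))⟩)

lemma act_bwd {q q' : (L1 × L2) × ((C1 ⊕ C2) → ℝ≥0)} {a : Act}
    (h : ((A.sem).conj (B.sem)).actTrans (TIOA.stateMap q) a (TIOA.stateMap q'))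
    (hp : P2 A B (TIOA.stateMap q')) :
    ((A.conjA B).sem).actTrans q a q' := by
  obtain ⟨⟨ql1, ql2⟩, qv⟩ := q
  obtain ⟨⟨ql1', ql2'⟩, qv'⟩ := q'
  obtain ⟨hpA, hpB⟩ := hp
  rcases h with ⟨hacts, ⟨g1, c1, hA, hsA, hrA, hiA⟩, ⟨g2, c2, hB, hsB, hrB, hiB⟩⟩ |
    ⟨hacts, ⟨g1, c1, hA, hsA, hrA, hiA⟩, hBeq⟩ |
    ⟨hacts, ⟨g2, c2, hB, hsB, hrB, hiB⟩, hAeq⟩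
  · refine ⟨ClockGuard.and (ClockGuard.map Sum.inl g1) (ClockGuard.map Sum.inr g2),
      Sum.inl '' c1 ∪ Sum.inr '' c2,
      Or.inl ⟨ql1, ql2, a, g1, g2, c1, c2, ql1', ql2', rfl, hacts, hA, hB⟩,
      ⟨(sat_map Sum.inl qv g1).mpr hsA, (sat_map Sum.inr qv g2).mpr hsB⟩,
      funext fun x => ?_,
      ⟨(sat_map Sum.inl qv' (A.inv ql1')).mpr hpA,
        (sat_map Sum.inr qv' (B.inv ql2')).mpr hpB⟩⟩
    cases x with
    | inl x => exact (congrFun hrA x).trans (reset_union_inl qv c1 c2 x).symm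
    | inr x => exact (congrFun hrB x).trans (reset_union_inr qv c1 c2 x).symm
  · have hb1 : ql2' = ql2 := congrArg Prod.fst hBeq
    have hb2 : (fun x => qv' (Sum.inr x)) = (fun x => qv (Sum.inr x)) :=
      congrArg Prod.snd hBeq
    subst hb1
    refine ⟨ClockGuard.map Sum.inl g1, Sum.inl '' c1,
      Or.inr (Or.inl ⟨ql1, _, a, g1, c1, ql1', rfl, hacts, hA⟩),
      (sat_map Sum.inl qv g1).mpr hsA,
      funext fun x => ?_,
      ⟨(sat_map Sum.inl qv' (A.inv ql1')).mpr hpA,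
        (sat_map Sum.inr qv' (B.inv ql2')).mpr hpB⟩⟩
    cases x with
    | inl x => exact (congrFun hrA x).trans (reset_inlimg_inl qv c1 x).symm
    | inr x => exact (congrFun hb2 x).trans (reset_inlimg_inr qv c1 x).symm
  · have hb1 : ql1' = ql1 := congrArg Prod.fst hAeq
    have hb2 : (fun x => qv' (Sum.inl x)) = (fun x => qv (Sum.inl x)) :=
      congrArg Prod.snd hAeq
    subst hb1
    refine ⟨ClockGuard.map Sum.inr g2, Sum.inr '' c2,
      Or.inr (Or.inr ⟨_, ql2, a, g2, c2, ql2', rfl, hacts, hB⟩),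
      (sat_map Sum.inr qv g2).mpr hsB,
      funext fun x => ?_,
      ⟨(sat_map Sum.inl qv' (A.inv ql1')).mpr hpA,
        (sat_map Sum.inr qv' (B.inv ql2')).mpr hpB⟩⟩
    cases x with
    | inl x => exact (congrFun hb2 x).trans (reset_inrimg_inl qv c2 x).symm
    | inr x => exact (congrFun hrB x).trans (reset_inrimg_inr qv c2 x).symm

lemma delay_P2 {y y' : (L1 × (C1 → ℝ≥0)) × (L2 × (C2 → ℝ≥0))} {d : ℝ≥0}
    (h : ((A.sem).conj (B.sem)).delayTrans y d y') : P2 A B y := by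
  obtain ⟨⟨hA1, hA2, hA3, hA4⟩, ⟨hB1, hB2, hB3, hB4⟩⟩ := h
  rw [hA2] at hA3
  rw [hB2] at hB3
  rcases eq_or_ne d 0 with rfl | hd
  · exact ⟨(sat_add_zero _ _).mp hA3, (sat_add_zero _ _).mp hB3⟩
  · exact ⟨(sat_add_zero _ _).mp (hA4 0 (zero_lt_iff.mpr hd)),
      (sat_add_zero _ _).mp (hB4 0 (zero_lt_iff.mpr hd))⟩

lemma errSet_mono {Q : Type} (S : TIOTS Act Q) {Z W : Set Q} (h : Z ⊆ W) :
    S.errSet Z ⊆ S.errSet W := by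
  rintro q ⟨e1, e2⟩
  exact ⟨e1, fun d o ho q' hd =>
    (e2 d o ho q' hd).imp id fun hall q'' ht => h (hall q'' ht)⟩

lemma theta_mono {Q : Type} (S : TIOTS Act Q) {X Y : Set Q} (h : X ⊆ Y) :
    S.Theta X ⊆ S.Theta Y := by
  rintro q ⟨h1, h2⟩
  refine ⟨⟨trivial, fun he => h1.2
      (errSet_mono S (Set.diff_subset_diff (Set.Subset.refl _) h) he)⟩, ?_⟩
  intro d
  rcases h2 d with hc | ⟨d', hd', q', q'', hq', hq'', o, ho, hdel, hact, hin⟩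
  · exact Or.inl fun q' hdq' => ⟨h (hc q' hdq').1, fun i hi =>
      let ⟨q'', hq'', ha⟩ := (hc q' hdq').2 i hi; ⟨q'', h hq'', ha⟩⟩
  · exact Or.inr ⟨d', hd', q', q'', h hq', h hq'', o, ho, hdel, hact,
      fun i hi => let ⟨q''', h3, ha⟩ := hin i hi; ⟨q''', h h3, ha⟩⟩

lemma mem_consSet_of_postfixed {Q : Type} {S : TIOTS Act Q} {X : Set Q}
    (hX : X ⊆ S.Theta X) {q : Q} (hq : q ∈ X) : q ∈ S.consSet :=
  Set.mem_sUnion.2 ⟨X, hX, hq⟩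

lemma consSet_subset_theta {Q : Type} (S : TIOTS Act Q) :
    S.consSet ⊆ S.Theta S.consSet := by
  intro q hq
  obtain ⟨X, hX, hqX⟩ := hq
  exact theta_mono S (fun z hz => Set.mem_sUnion.2 ⟨X, hX, hz⟩) (hX hqX)

lemma cons_P2 {y : (L1 × (C1 → ℝ≥0)) × (L2 × (C2 → ℝ≥0))}
    (hy : y ∈ ((A.sem).conj (B.sem)).consSet) : P2 A B y := by
  by_contra hp
  have hth := consSet_subset_theta ((A.sem).conj (B.sem)) hy
  have hnod : ∀ (d : ℝ≥0) y', ¬ ((A.sem).conj (B.sem)).delayTrans y d y' :=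
    fun d y' hdel => hp (delay_P2 A B hdel)
  exact hth.1.2 ⟨⟨0, fun ⟨y', h⟩ => hnod 0 y' h⟩,
    fun d o ho y' hdel => absurd hdel (hnod d y')⟩

end ConjHelper
namespace ConjHelper

variable {Act L1 L2 C1 C2 : Type} (A : TIOA Act L1 C1) (B : TIOA Act L2 C2)

lemma postfixed_fwd :
    {y : (L1 × (C1 → ℝ≥0)) × (L2 × (C2 → ℝ≥0)) | tm y ∈ ((A.conjA B).sem).consSet} ⊆
      ((A.sem).conj (B.sem)).Theta
        {y | tm y ∈ ((A.conjA B).sem).consSet} := by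
  intro y hy
  obtain ⟨hne, hcond⟩ := consSet_subset_theta ((A.conjA B).sem) hy
  constructor
  · refine ⟨trivial, fun herr => hne.2 ?_⟩
    obtain ⟨⟨d0, hd0⟩, hsnd⟩ := herr
    refine ⟨⟨d0, fun ⟨q', h⟩ => hd0 ⟨TIOA.stateMap q', by
      have := (delay_iff A B (tm y) q' d0).mp h
      rwa [sm_tm] at this⟩⟩, ?_⟩
    intro d o ho q₁' hdel1
    have hdel2 : ((A.sem).conj (B.sem)).delayTrans y d (TIOA.stateMap q₁') := by
      have := (delay_iff A B (tm y) q₁' d).mp hdel1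
      rwa [sm_tm] at this
    rcases hsnd d o ho (TIOA.stateMap q₁') hdel2 with hno | hall
    · exact Or.inl fun ⟨q'', hact1⟩ => hno ⟨TIOA.stateMap q'', by
        have := act_fwd A B (q := q₁') (q' := q'') hact1
        exact this⟩
    · refine Or.inr fun q'' hact1 => ⟨trivial, fun hq'' => ?_⟩
      have h2 := hall (TIOA.stateMap q'') (act_fwd A B hact1)
      exact h2.2 (by rw [Set.mem_setOf_eq, tm_sm]; exact hq'')
  · intro d
    rcases hcond d with hc | ⟨d', hdd, q', q'', hq', hq'', o, ho, hdel1, hact1, hin⟩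
    · refine Or.inl fun y' hdel2 => ?_
      have hdel1 : ((A.conjA B).sem).delayTrans (tm y) d (tm y') := by
        rw [delay_iff A B (tm y) (tm y') d, sm_tm, sm_tm]; exact hdel2
      obtain ⟨hcons1, hinp⟩ := hc (tm y') hdel1
      refine ⟨hcons1, fun i hi => ?_⟩
      obtain ⟨q'', hq''cons, hact1⟩ := hinp i hi
      refine ⟨TIOA.stateMap q'', by rw [Set.mem_setOf_eq, tm_sm]; exact hq''cons, ?_⟩
      have := act_fwd A B (q := tm y') (q' := q'') hact1
      rwa [sm_tm] at this
    · refine Or.inr ⟨d', hdd, TIOA.stateMap q', TIOA.stateMap q'',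
        by rw [Set.mem_setOf_eq, tm_sm]; exact hq',
        by rw [Set.mem_setOf_eq, tm_sm]; exact hq'', o, ho, ?_, act_fwd A B hact1, ?_⟩
      · have := (delay_iff A B (tm y) q' d').mp ?_
        · rwa [sm_tm] at this
        · exact hdel1
      · intro i hi
        obtain ⟨q''', h3, ha⟩ := hin i hi
        exact ⟨TIOA.stateMap q''', by rw [Set.mem_setOf_eq, tm_sm]; exact h3,
          act_fwd A B ha⟩

lemma postfixed_back :
    {q : (L1 × L2) × ((C1 ⊕ C2) → ℝ≥0) |
        TIOA.stateMap q ∈ ((A.sem).conj (B.sem)).consSet} ⊆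
      ((A.conjA B).sem).Theta
        {q | TIOA.stateMap q ∈ ((A.sem).conj (B.sem)).consSet} := by
  intro q hq
  obtain ⟨hne, hcond⟩ := consSet_subset_theta ((A.sem).conj (B.sem)) hq
  constructor
  · refine ⟨trivial, fun herr => hne.2 ?_⟩
    obtain ⟨⟨d0, hd0⟩, hsnd⟩ := herr
    refine ⟨⟨d0, fun ⟨y', h⟩ => hd0 ⟨tm y', (delay_iff A B q (tm y') d0).mpr
      (by rwa [sm_tm])⟩⟩, ?_⟩
    intro d o ho y' hdel2
    have hdel1 : ((A.conjA B).sem).delayTrans q d (tm y') :=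
      (delay_iff A B q (tm y') d).mpr (by rwa [sm_tm])
    have h2 := hsnd d o ho (tm y') hdel1
    refine Or.inr fun y'' hact2 => ⟨trivial, fun hy'' => ?_⟩
    have hp : P2 A B y'' := cons_P2 A B hy''
    have hact1 : ((A.conjA B).sem).actTrans (tm y') o (tm y'') := by
      refine act_bwd A B ?_ ?_
      · rw [sm_tm, sm_tm]; exact hact2
      · rw [sm_tm]; exact hp
    rcases h2 with hno | hall
    · exact hno ⟨tm y'', hact1⟩
    · exact (hall (tm y'') hact1).2 (by rw [Set.mem_setOf_eq, sm_tm]; exact hy'')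
  · intro d
    rcases hcond d with hc | ⟨d', hdd, y', y'', hy', hy'', o, ho, hdel2, hact2, hin⟩
    · refine Or.inl fun q₁' hdel1 => ?_
      obtain ⟨hcons, hinp⟩ := hc (TIOA.stateMap q₁') ((delay_iff A B q q₁' d).mp hdel1)
      refine ⟨hcons, fun i hi => ?_⟩
      obtain ⟨y'', hy''cons, hact2⟩ := hinp i hi
      refine ⟨tm y'', by rw [Set.mem_setOf_eq, sm_tm]; exact hy''cons, ?_⟩
      refine act_bwd A B ?_ ?_
      · rw [sm_tm]; exact hact2
      · rw [sm_tm]; exact cons_P2 A B hy''cons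
    · refine Or.inr ⟨d', hdd, tm y', tm y'',
        by rw [Set.mem_setOf_eq, sm_tm]; exact hy',
        by rw [Set.mem_setOf_eq, sm_tm]; exact hy'', o, ho,
        (delay_iff A B q (tm y') d').mpr (by rwa [sm_tm]), ?_, ?_⟩
      · refine act_bwd A B ?_ ?_
        · rw [sm_tm, sm_tm]; exact hact2
        · rw [sm_tm]; exact cons_P2 A B hy''
      · intro i hi
        obtain ⟨y''', h3, ha⟩ := hin i hi
        refine ⟨tm y''', by rw [Set.mem_setOf_eq, sm_tm]; exact h3, ?_⟩
        refine act_bwd A B ?_ ?_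
        · rw [sm_tm, sm_tm]; exact ha
        · rw [sm_tm]; exact cons_P2 A B h3

lemma cons_iff (q : (L1 × L2) × ((C1 ⊕ C2) → ℝ≥0)) :
    q ∈ ((A.conjA B).sem).consSet ↔
      TIOA.stateMap q ∈ ((A.sem).conj (B.sem)).consSet := by
  constructor
  · intro h
    exact mem_consSet_of_postfixed (postfixed_fwd A B)
      (by rw [Set.mem_setOf_eq, tm_sm]; exact h)
  · intro h
    exact mem_consSet_of_postfixed (postfixed_back A B) h

end ConjHelper
/-- Conjunction commutes with semantics up to adversarial
pruning: `(⟦A¹ ∧ A²⟧)^Δ = (⟦A¹⟧ ∧ ⟦A²⟧)^Δ` (identifying states via the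
canonical bijection `stateMap`): same states (consistent-state sets), same
initial state, same action sets with the same partition, and same
(restricted) transition relation. -/
theorem conjA_sem_prune_eq {Act L1 L2 C1 C2 : Type}
    (A : TIOA Act L1 C1) (B : TIOA Act L2 C2)
    (h1 : Disjoint A.inputs B.outputs) (h2 : Disjoint A.outputs B.inputs) :
    (∀ q : (L1 × L2) × ((C1 ⊕ C2) → ℝ≥0),
        q ∈ ((A.conjA B).sem).consSet ↔
          TIOA.stateMap q ∈ ((A.sem).conj (B.sem)).consSet) ∧
    TIOA.stateMap ((A.conjA B).sem).init = ((A.sem).conj (B.sem)).init ∧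
    ((A.conjA B).sem).inputs = ((A.sem).conj (B.sem)).inputs ∧
    ((A.conjA B).sem).outputs = ((A.sem).conj (B.sem)).outputs ∧
    (∀ (q : (L1 × L2) × ((C1 ⊕ C2) → ℝ≥0)) (a : Act)
        (q' : (L1 × L2) × ((C1 ⊕ C2) → ℝ≥0)),
      (((A.conjA B).sem).actTrans q a q' ∧
          q ∈ ((A.conjA B).sem).consSet ∧ q' ∈ ((A.conjA B).sem).consSet) ↔
      (((A.sem).conj (B.sem)).actTrans (TIOA.stateMap q) a (TIOA.stateMap q') ∧
          TIOA.stateMap q ∈ ((A.sem).conj (B.sem)).consSet ∧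
          TIOA.stateMap q' ∈ ((A.sem).conj (B.sem)).consSet)) ∧
    (∀ (q : (L1 × L2) × ((C1 ⊕ C2) → ℝ≥0)) (d : ℝ≥0)
        (q' : (L1 × L2) × ((C1 ⊕ C2) → ℝ≥0)),
      (((A.conjA B).sem).delayTrans q d q' ∧
          q ∈ ((A.conjA B).sem).consSet ∧ q' ∈ ((A.conjA B).sem).consSet) ↔
      (((A.sem).conj (B.sem)).delayTrans (TIOA.stateMap q) d (TIOA.stateMap q') ∧
          TIOA.stateMap q ∈ ((A.sem).conj (B.sem)).consSet ∧
          TIOA.stateMap q' ∈ ((A.sem).conj (B.sem)).consSet)) := by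
  refine ⟨ConjHelper.cons_iff A B, rfl, rfl, rfl, ?_, ?_⟩
  · intro q a q'
    constructor
    · rintro ⟨hact, hq, hq'⟩
      exact ⟨ConjHelper.act_fwd A B hact, (ConjHelper.cons_iff A B q).mp hq,
        (ConjHelper.cons_iff A B q').mp hq'⟩
    · rintro ⟨hact, hq, hq'⟩
      exact ⟨ConjHelper.act_bwd A B hact (ConjHelper.cons_P2 A B hq'),
        (ConjHelper.cons_iff A B q).mpr hq, (ConjHelper.cons_iff A B q').mpr hq'⟩
  · intro q d q'
    constructor
    · rintro ⟨h, hq, hq'⟩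
      exact ⟨(ConjHelper.delay_iff A B q q' d).mp h,
        (ConjHelper.cons_iff A B q).mp hq, (ConjHelper.cons_iff A B q').mp hq'⟩
    · rintro ⟨h, hq, hq'⟩
      exact ⟨(ConjHelper.delay_iff A B q q' d).mpr h,
        (ConjHelper.cons_iff A B q).mpr hq, (ConjHelper.cons_iff A B q').mpr hq'⟩
end

section
/- Conjunction commutes with semantics for equal alphabets: let A^1 and A^2 be TIOAs with Act_i^1 = Act_i^2, Act_o^1 = Act_o^2 and disjoint clock sets. Identifying states via the canonical bijection ((l^1,l^2), v) ↔ ((l^1, v|_{Clk^1}), (l^2, v|_{Clk^2})), one has ⟦A^1 ∧ A^2⟧ = ⟦A^1⟧ ∧ ⟦A^2⟧ (the same set of states, initial state, action sets with the same input/output partition, and transition relation). -/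
open scoped NNReal

private lemma satMapAux {C C' : Type} (f : C → C') (v : C' → ℝ≥0) (g : ClockGuard C) :
    ClockGuard.sat v (g.map f) ↔ ClockGuard.sat (fun x => v (f x)) g := by
  induction g <;> simp [ClockGuard.map, ClockGuard.sat, *]

/-- Conjunction commutes with semantics for equal alphabets:
`⟦A¹ ∧ A²⟧ = ⟦A¹⟧ ∧ ⟦A²⟧` (identifying states via the canonical bijection
`stateMap`). -/
theorem conjA_sem_eq_of_eq_alphabet {Act L1 L2 C1 C2 : Type}
    (A : TIOA Act L1 C1) (B : TIOA Act L2 C2)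
    (hin : A.inputs = B.inputs) (hout : A.outputs = B.outputs) :
    TIOA.stateMap ((A.conjA B).sem).init = ((A.sem).conj (B.sem)).init ∧
    ((A.conjA B).sem).inputs = ((A.sem).conj (B.sem)).inputs ∧
    ((A.conjA B).sem).outputs = ((A.sem).conj (B.sem)).outputs ∧
    (∀ (q : (L1 × L2) × ((C1 ⊕ C2) → ℝ≥0)) (a : Act)
        (q' : (L1 × L2) × ((C1 ⊕ C2) → ℝ≥0)),
      ((A.conjA B).sem).actTrans q a q' ↔
        ((A.sem).conj (B.sem)).actTrans (TIOA.stateMap q) a (TIOA.stateMap q')) ∧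
    (∀ (q : (L1 × L2) × ((C1 ⊕ C2) → ℝ≥0)) (d : ℝ≥0)
        (q' : (L1 × L2) × ((C1 ⊕ C2) → ℝ≥0)),
      ((A.conjA B).sem).delayTrans q d q' ↔
        ((A.sem).conj (B.sem)).delayTrans (TIOA.stateMap q) d (TIOA.stateMap q')) := by
  have hacts : A.acts = B.acts := by
    simp only [TIOA.acts, hin, hout]
  have hacts2 : (A.sem).acts = (B.sem).acts := hacts
  refine ⟨rfl, rfl, rfl, ?_, ?_⟩
  · rintro ⟨⟨ql1, ql2⟩, v⟩ a ⟨⟨ql1', ql2'⟩, v'⟩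
    constructor
    · rintro ⟨g, c, he, hsat, hres, hinv⟩
      rcases he with ⟨l1, l2, a', g1, g2, c1, c2, l1', l2', heq, hmem, e1, e2⟩ |
        ⟨l1, l2, a', g1, c1, l1', heq, hmem, e1⟩ |
        ⟨l1, l2, a', g2, c2, l2', heq, hmem, e2⟩
      · simp only [Prod.mk.injEq] at heq
        obtain ⟨⟨hl1, hl2⟩, ha, hg, hc, hl1', hl2'⟩ := heq
        subst hl1 hl2 ha hg hc hl1' hl2'
        subst hres
        rcases hsat with ⟨hs1, hs2⟩
        rcases hinv with ⟨hi1, hi2⟩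
        refine Or.inl ⟨hmem, ?_, ?_⟩
        · refine ⟨g1, c1, e1, (satMapAux Sum.inl _ _).mp hs1, ?_, ?_⟩
          · funext x
            by_cases hx : x ∈ c1 <;>
              simp [TIOA.stateMap, TIOA.resetVal, hx, Set.mem_union, Set.mem_image]
          · exact (satMapAux Sum.inl _ _).mp hi1
        · refine ⟨g2, c2, e2, (satMapAux Sum.inr _ _).mp hs2, ?_, ?_⟩
          · funext x
            by_cases hx : x ∈ c2 <;>
              simp [TIOA.stateMap, TIOA.resetVal, hx, Set.mem_union, Set.mem_image]
          · exact (satMapAux Sum.inr _ _).mp hi2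
      · exact absurd (hacts ▸ hmem.1) hmem.2
      · exact absurd (hacts ▸ hmem.1) hmem.2
    · rintro (⟨hm, ⟨g1, c1, e1, s1, r1, i1⟩, ⟨g2, c2, e2, s2, r2, i2⟩⟩ |
        ⟨hm, _⟩ | ⟨hm, _⟩)
      · refine ⟨ClockGuard.and (ClockGuard.map Sum.inl g1) (ClockGuard.map Sum.inr g2),
          Sum.inl '' c1 ∪ Sum.inr '' c2,
          Or.inl ⟨ql1, ql2, a, g1, g2, c1, c2, ql1', ql2', rfl, hm, e1, e2⟩,
          ⟨(satMapAux Sum.inl _ _).mpr s1, (satMapAux Sum.inr _ _).mpr s2⟩, ?_,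
          ⟨(satMapAux Sum.inl _ _).mpr i1, (satMapAux Sum.inr _ _).mpr i2⟩⟩
        funext x
        cases x with
        | inl y =>
          have hr := congrFun r1 y
          simp only [TIOA.stateMap] at hr
          by_cases hy : y ∈ c1 <;>
            simp_all [TIOA.resetVal, Set.mem_union, Set.mem_image]
        | inr y =>
          have hr := congrFun r2 y
          simp only [TIOA.stateMap] at hr
          by_cases hy : y ∈ c2 <;>
            simp_all [TIOA.resetVal, Set.mem_union, Set.mem_image]
      · exact absurd (hacts2 ▸ hm.1) hm.2
      · exact absurd (hacts2.symm ▸ hm.1) hm.2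
  · rintro ⟨⟨ql1, ql2⟩, v⟩ d ⟨⟨ql1', ql2'⟩, v'⟩
    constructor
    · rintro ⟨h1, h2, ⟨h3a, h3b⟩, h4⟩
      simp only [Prod.mk.injEq] at h1
      subst h2
      exact ⟨⟨h1.1, rfl, (satMapAux Sum.inl _ _).mp h3a,
          fun d' hd' => (satMapAux Sum.inl _ _).mp (h4 d' hd').1⟩,
        ⟨h1.2, rfl, (satMapAux Sum.inr _ _).mp h3b,
          fun d' hd' => (satMapAux Sum.inr _ _).mp (h4 d' hd').2⟩⟩
    · rintro ⟨⟨e1a, e1v, e1i, e1p⟩, ⟨e2a, e2v, e2i, e2p⟩⟩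
      refine ⟨by rw [show ql1' = ql1 from e1a, show ql2' = ql2 from e2a], ?_,
        ⟨(satMapAux Sum.inl _ _).mpr e1i, (satMapAux Sum.inr _ _).mpr e2i⟩,
        fun d' hd' => ⟨(satMapAux Sum.inl _ _).mpr (e1p d' hd'),
          (satMapAux Sum.inr _ _).mpr (e2p d' hd')⟩⟩
      funext x
      cases x with
      | inl y => exact congrFun e1v y
      | inr y => exact congrFun e2v y
end
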